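/- arXiv:1508.00840 — 2 statements merged into one kernel-verified Lean document; each statement's English description precedes it below -/
import Mathlib

section
/- Supersolution obtained by bending the smooth arrival time to infinity (key computation of Lemma 3.3, Euclidean-ambient case): let U ⊆ ℝⁿ be open and let u₀ be a C² function on U satisfying, for some constant C₀ ≥ 1: 1/C₀ ≤ |Du₀| ≤ C₀, |D²u₀| ≤ C₀, and the smooth level set flow equation div(Du₀/|Du₀|) + 1/|Du₀| = 0 on U. Then there exists T > 0 depending only on C₀ such that for every ε ∈ (0,1] and σ > 0, the function v = 1/(T − u₀) − 1/T satisfies the supersolution inequality div(Dv/√(ε² + |Dv|²)) + 1/√(ε² + |Dv|²) ≤ σv on U ∩ {0 ≤ u₀ < T}. -/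
open scoped BigOperators RealInnerProductSpace

/-- Divergence of a vector field on Euclidean space. -/
noncomputable def vdiv {n : ℕ} (F : EuclideanSpace ℝ (Fin n) → EuclideanSpace ℝ (Fin n))
    (x : EuclideanSpace ℝ (Fin n)) : ℝ :=
  ∑ i, fderiv ℝ F x (EuclideanSpace.single i 1) i

/-- The regularized level set operator
`Q_{ε,σ,κ}[w] = div(Dw/√(ε²+|Dw|²)) + κ/√(ε²+|Dw|²) − σw`. -/
noncomputable def Qop {n : ℕ} (ε σ κ : ℝ) (w : EuclideanSpace ℝ (Fin n) → ℝ)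
    (x : EuclideanSpace ℝ (Fin n)) : ℝ :=
  vdiv (fun y => (Real.sqrt (ε ^ 2 + ‖gradient w y‖ ^ 2))⁻¹ • gradient w y) x
    + κ / Real.sqrt (ε ^ 2 + ‖gradient w x‖ ^ 2) - σ * w x

/-- `u` solves the (ε,σ,κ)-Dirichlet problem on `K`:
`Q_{ε,σ,κ}[u] = 0` in `K` and `u = 0` on `∂K`. -/
def SolvesDirichlet {n : ℕ} (ε σ κ : ℝ) (K : Set (EuclideanSpace ℝ (Fin n)))
    (u : EuclideanSpace ℝ (Fin n) → ℝ) : Prop :=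
  (∀ x ∈ K, Qop ε σ κ u x = 0) ∧ ∀ x ∈ frontier K, u x = 0

/-!
With `τ = T - u₀` and `v = 1/τ - 1/T` we have `Dv = Du₀/τ²`. Expanding
`div(Dv/√(ε² + |Dv|²))` by the product rule and eliminating `Δu₀` through the level set flow
equation, `Δu₀ = ⟪Du₀, D²u₀ Du₀⟫/|Du₀|² - 1`, the left-hand side of the supersolution inequality
becomes a fraction with positive denominator and numerator
`ε²(τ⁴q + 2τ³|Du₀|⁴) - (1 - τ²)(ε²τ⁴ + |Du₀|²)|Du₀|²`, where `q = ⟪Du₀, D²u₀ Du₀⟫ ≤ C₀|Du₀|²`.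
For `τ ≤ T = 1/(2C₀)` the term `-(1 - τ²)|Du₀|⁴ ≤ -¾|Du₀|⁴` dominates because `|Du₀| ≥ 1/C₀`,
and `σv ≥ 0` because `u₀ ≥ 0`.
-/

open Topology

theorem EuclideanSpace.sum_apply_single_mul {ι : Type*} [Fintype ι] [DecidableEq ι]
    (L : EuclideanSpace ℝ ι →L[ℝ] ℝ) (w : EuclideanSpace ℝ ι) :
    ∑ i, L (EuclideanSpace.single i 1) * w i = L w := by
  conv_rhs => rw [← (EuclideanSpace.basisFun ι ℝ).sum_repr w]
  simp [map_sum, mul_comm]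

theorem HasDerivAt.gradient_comp {F : Type*} [NormedAddCommGroup F] [InnerProductSpace ℝ F]
    [CompleteSpace F] {f : ℝ → ℝ} {f' : ℝ} {u : F → ℝ} {y : F} (hf : HasDerivAt f f' (u y))
    (hu : DifferentiableAt ℝ u y) : gradient (fun z => f (u z)) y = f' • gradient u y := by
  have h : HasFDerivAt (fun z => f (u z)) (f' • fderiv ℝ u y) y :=
    hf.comp_hasFDerivAt y hu.hasFDerivAt
  rw [gradient, h.fderiv, map_smul]
  rfl

theorem ContDiffAt.differentiableAt_gradient {F : Type*} [NormedAddCommGroup F]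
    [InnerProductSpace ℝ F] [CompleteSpace F] {u : F → ℝ} {x : F} (hu : ContDiffAt ℝ 2 u x) :
    DifferentiableAt ℝ (gradient u) x :=
  (InnerProductSpace.toDual ℝ F).symm.toContinuousLinearEquiv.differentiableAt.comp x
    ((hu.fderiv_right one_add_one_eq_two.le).differentiableAt one_ne_zero)

theorem real_inner_apply_self_le {E : Type*} [NormedAddCommGroup E] [InnerProductSpace ℝ E]
    (H : E →L[ℝ] E) (v : E) : ⟪v, H v⟫ ≤ ‖H‖ * ‖v‖ ^ 2 :=
  calc ⟪v, H v⟫ ≤ ‖v‖ * ‖H v‖ := real_inner_le_norm _ _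
    _ ≤ ‖v‖ * (‖H‖ * ‖v‖) := by gcongr; exact H.le_opNorm v
    _ = ‖H‖ * ‖v‖ ^ 2 := by ring

section Divergence

variable {n : ℕ} {G : EuclideanSpace ℝ (Fin n) → EuclideanSpace ℝ (Fin n)}
  {G' : EuclideanSpace ℝ (Fin n) →L[ℝ] EuclideanSpace ℝ (Fin n)} {x : EuclideanSpace ℝ (Fin n)}

theorem HasFDerivAt.vdiv_eq (hG : HasFDerivAt G G' x) :
    vdiv G x = ∑ i, G' (EuclideanSpace.single i 1) i := by
  rw [vdiv, hG.fderiv]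

theorem vdiv_smul {φ : EuclideanSpace ℝ (Fin n) → ℝ} {φ' : EuclideanSpace ℝ (Fin n) →L[ℝ] ℝ}
    (hφ : HasFDerivAt φ φ' x) (hG : HasFDerivAt G G' x) :
    vdiv (fun y => φ y • G y) x = φ' (G x) + φ x * vdiv G x := by
  rw [(hφ.fun_smul hG).vdiv_eq, hG.vdiv_eq, Finset.mul_sum,
    ← EuclideanSpace.sum_apply_single_mul φ' (G x), ← Finset.sum_add_distrib]
  simp [add_comm]

theorem vdiv_inv_sqrt_smul {e : ℝ} (hG : HasFDerivAt G G' x) (he : 0 < e + ‖G x‖ ^ 2) :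
    vdiv (fun y => (√(e + ‖G y‖ ^ 2))⁻¹ • G y) x
      = -(⟪G x, G' (G x)⟫ / √(e + ‖G x‖ ^ 2) ^ 3) + vdiv G x / √(e + ‖G x‖ ^ 2) := by
  have hs : 0 < √(e + ‖G x‖ ^ 2) := Real.sqrt_pos.mpr he
  have hφ : HasFDerivAt (fun y => (√(e + ‖G y‖ ^ 2))⁻¹)
      ((-(1 / (2 * √(e + ‖G x‖ ^ 2))) / √(e + ‖G x‖ ^ 2) ^ 2) •
        (2 • (innerSL ℝ (G x)).comp G')) x :=
    ((Real.hasDerivAt_sqrt he.ne').inv hs.ne').comp_hasFDerivAt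
      (f := fun y => e + ‖G y‖ ^ 2) x (hG.norm_sq.const_add e)
  rw [vdiv_smul hφ hG]
  simp only [ContinuousLinearMap.comp_apply, innerSL_apply_apply, smul_apply,
    smul_eq_mul]
  field_simp
  ring

theorem Filter.EventuallyEq.vdiv_eq {F₁ F₂ : EuclideanSpace ℝ (Fin n) → EuclideanSpace ℝ (Fin n)}
    (h : F₁ =ᶠ[𝓝 x] F₂) : vdiv F₁ x = vdiv F₂ x := by
  rw [vdiv, vdiv, h.fderiv_eq]

theorem vdiv_inv_norm_smul (hG : HasFDerivAt G G' x) (hx : G x ≠ 0) :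
    vdiv (fun y => ‖G y‖⁻¹ • G y) x
      = -(⟪G x, G' (G x)⟫ / ‖G x‖ ^ 3) + vdiv G x / ‖G x‖ := by
  have h := vdiv_inv_sqrt_smul (e := 0) hG (by positivity)
  simpa only [zero_add, Real.sqrt_sq (norm_nonneg _)] using h

end Divergence

theorem bending_poly_le {C₀ τ a q ε : ℝ} (hC₀ : 1 ≤ C₀) (hτ : 0 < τ) (hτC : τ ≤ (2 * C₀)⁻¹)
    (ha : C₀⁻¹ ≤ a) (hq : q ≤ C₀ * a ^ 2) (hε : ε ^ 2 ≤ 1) :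
    ε ^ 2 * (τ ^ 4 * q + 2 * τ ^ 3 * a ^ 4) ≤ (1 - τ ^ 2) * (ε ^ 2 * τ ^ 4 + a ^ 2) * a ^ 2 := by
  have hC₀pos : 0 < C₀ := one_pos.trans_le hC₀
  have hCτ : 2 * C₀ * τ ≤ 1 := by
    have := mul_le_mul_of_nonneg_left hτC (by positivity : (0 : ℝ) ≤ 2 * C₀)
    rwa [mul_inv_cancel₀ (by positivity)] at this
  have hCa : 1 ≤ C₀ * a := by
    have := mul_le_mul_of_nonneg_left ha hC₀pos.le
    rwa [mul_inv_cancel₀ hC₀pos.ne'] at this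
  have hτ2 : τ ^ 2 ≤ 1 / 4 := by nlinarith
  have hτ3 : 8 * τ ^ 3 ≤ 1 := by nlinarith
  have hτ4 : 2 * C₀ * τ ^ 4 ≤ a ^ 2 := by
    have h16 : (2 * C₀ * τ) ^ 4 ≤ 1 := pow_le_one₀ (by positivity) hCτ
    have h : 2 * C₀ * τ ^ 4 * C₀ ^ 2 ≤ a ^ 2 * C₀ ^ 2 := by
      nlinarith [mul_nonneg (mul_nonneg (pow_nonneg hC₀pos.le 3) (pow_nonneg hτ.le 4))
        (by linarith : (0 : ℝ) ≤ 16 * C₀ - 2)]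
    exact le_of_mul_le_mul_right h (by positivity)
  have hεq : ε ^ 2 * q ≤ C₀ * a ^ 2 := by
    rcases le_or_gt 0 q with hq0 | hq0
    · nlinarith [sq_nonneg ε]
    · nlinarith [sq_nonneg ε, sq_nonneg a]
  have hε0 := sq_nonneg ε
  have ha0 := sq_nonneg a
  linarith [mul_le_mul_of_nonneg_left hεq (pow_nonneg hτ.le 4),
    mul_le_mul_of_nonneg_right hτ4 ha0,
    mul_le_mul_of_nonneg_right hε (mul_nonneg (pow_nonneg hτ.le 3) (pow_nonneg ha0 2)),
    mul_le_mul_of_nonneg_right hτ3 (pow_nonneg ha0 2),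
    mul_le_mul_of_nonneg_right hτ2 (pow_nonneg ha0 2),
    mul_nonneg (by linarith : (0 : ℝ) ≤ 1 - τ ^ 2)
      (mul_nonneg (mul_nonneg hε0 (pow_nonneg hτ.le 4)) ha0)]

theorem bending_expr_nonpos {C₀ τ a q ε : ℝ} (hC₀ : 1 ≤ C₀) (hτ : 0 < τ)
    (hτC : τ ≤ (2 * C₀)⁻¹) (ha : C₀⁻¹ ≤ a) (hq : q ≤ C₀ * a ^ 2) (hε : ε ^ 2 ≤ 1) :
    -((q / τ ^ 6 + 2 * a ^ 4 / τ ^ 7) / √(ε ^ 2 + a ^ 2 / τ ^ 4) ^ 3)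
      + ((q / a ^ 2 - 1) / τ ^ 2 + 2 * a ^ 2 / τ ^ 3 + 1) / √(ε ^ 2 + a ^ 2 / τ ^ 4) ≤ 0 := by
  have ha0 : 0 < a := (inv_pos.mpr (one_pos.trans_le hC₀)).trans_le ha
  have hs : 0 < ε ^ 2 + a ^ 2 / τ ^ 4 := by positivity
  have hg := Real.sqrt_pos.mpr hs
  have hg2 := Real.sq_sqrt hs.le
  have key : -((q / τ ^ 6 + 2 * a ^ 4 / τ ^ 7) / √(ε ^ 2 + a ^ 2 / τ ^ 4) ^ 3)
      + ((q / a ^ 2 - 1) / τ ^ 2 + 2 * a ^ 2 / τ ^ 3 + 1) / √(ε ^ 2 + a ^ 2 / τ ^ 4)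
      = (ε ^ 2 * (τ ^ 4 * q + 2 * τ ^ 3 * a ^ 4) - (1 - τ ^ 2) * (ε ^ 2 * τ ^ 4 + a ^ 2) * a ^ 2)
        / (a ^ 2 * τ ^ 6 * √(ε ^ 2 + a ^ 2 / τ ^ 4) ^ 3) := by
    rw [pow_succ' _ 2, hg2]
    field_simp
    ring
  rw [key]
  exact div_nonpos_of_nonpos_of_nonneg
    (sub_nonpos.mpr (bending_poly_le hC₀ hτ hτC ha hq hε)) (by positivity)

section Bending

variable {n : ℕ} {u : EuclideanSpace ℝ (Fin n) → ℝ} {T : ℝ} {x : EuclideanSpace ℝ (Fin n)}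

theorem hasFDerivAt_inv_sub_sq {L : EuclideanSpace ℝ (Fin n) →L[ℝ] ℝ} (hu : HasFDerivAt u L x)
    (hx : u x ≠ T) : HasFDerivAt (fun y => ((T - u y) ^ 2)⁻¹) ((2 / (T - u x) ^ 3) • L) x := by
  have hτ : T - u x ≠ 0 := sub_ne_zero.mpr hx.symm
  have h : HasDerivAt (fun s => ((T - s) ^ 2)⁻¹) (2 / (T - u x) ^ 3) (u x) := by
    refine ((((hasDerivAt_id' (u x)).const_sub T).fun_pow 2).fun_inv
      (pow_ne_zero 2 hτ)).congr_deriv ?_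
    field_simp
    ring
  exact h.comp_hasFDerivAt x hu

theorem gradient_bend_eventuallyEq (hu : ∀ᶠ y in 𝓝 x, DifferentiableAt ℝ u y) (hx : u x < T) :
    gradient (fun y => (T - u y)⁻¹ - T⁻¹) =ᶠ[𝓝 x] fun y => ((T - u y) ^ 2)⁻¹ • gradient u y := by
  filter_upwards [hu, hu.self_of_nhds.continuousAt.eventually (isOpen_Iio.mem_nhds hx)]
    with y hy hyT
  have h : HasDerivAt (fun s => (T - s)⁻¹ - T⁻¹) ((T - u y) ^ 2)⁻¹ (u y) := by
    simpa using (((hasDerivAt_id (u y)).const_sub T).inv (sub_ne_zero.mpr hyT.ne')).sub_const T⁻¹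
  exact h.gradient_comp hy

theorem vdiv_gradient_eq_of_levelSetFlow
    {H : EuclideanSpace ℝ (Fin n) →L[ℝ] EuclideanSpace ℝ (Fin n)}
    (hH : HasFDerivAt (gradient u) H x) (hx : gradient u x ≠ 0)
    (hflow : vdiv (fun y => ‖gradient u y‖⁻¹ • gradient u y) x + ‖gradient u x‖⁻¹ = 0) :
    vdiv (gradient u) x = ⟪gradient u x, H (gradient u x)⟫ / ‖gradient u x‖ ^ 2 - 1 := by
  rw [vdiv_inv_norm_smul hH hx] at hflow
  have ha : ‖gradient u x‖ ≠ 0 := norm_ne_zero_iff.mpr hx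
  field_simp at hflow ⊢
  linarith

theorem Qop_bend_eq {ε σ : ℝ}
    {H : EuclideanSpace ℝ (Fin n) →L[ℝ] EuclideanSpace ℝ (Fin n)} (hε : ε ≠ 0)
    (hu : ∀ᶠ y in 𝓝 x, DifferentiableAt ℝ u y) (hH : HasFDerivAt (gradient u) H x)
    (hx : u x < T) :
    Qop ε σ 1 (fun y => (T - u y)⁻¹ - T⁻¹) x
      = -((⟪gradient u x, H (gradient u x)⟫ / (T - u x) ^ 6
            + 2 * ‖gradient u x‖ ^ 4 / (T - u x) ^ 7)
          / √(ε ^ 2 + ‖gradient u x‖ ^ 2 / (T - u x) ^ 4) ^ 3)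
        + (vdiv (gradient u) x / (T - u x) ^ 2 + 2 * ‖gradient u x‖ ^ 2 / (T - u x) ^ 3 + 1)
          / √(ε ^ 2 + ‖gradient u x‖ ^ 2 / (T - u x) ^ 4)
        - σ * ((T - u x)⁻¹ - T⁻¹) := by
  have hβ := hasFDerivAt_inv_sub_sq hu.self_of_nhds.hasFDerivAt hx.ne
  have hgrad := gradient_bend_eventuallyEq hu hx
  have hvdiv : vdiv (fun y => (√(ε ^ 2 + ‖gradient (fun y => (T - u y)⁻¹ - T⁻¹) y‖ ^ 2))⁻¹
        • gradient (fun y => (T - u y)⁻¹ - T⁻¹) y) x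
      = vdiv (fun y => (√(ε ^ 2 + ‖((T - u y) ^ 2)⁻¹ • gradient u y‖ ^ 2))⁻¹
        • (((T - u y) ^ 2)⁻¹ • gradient u y)) x :=
    (hgrad.fun_comp fun g => (√(ε ^ 2 + ‖g‖ ^ 2))⁻¹ • g).vdiv_eq
  rw [Qop, hvdiv, vdiv_inv_sqrt_smul (hβ.fun_smul hH) (by positivity), vdiv_smul hβ hH,
    hgrad.self_of_nhds]
  have hL : fderiv ℝ u x (gradient u x) = ‖gradient u x‖ ^ 2 := by
    rw [← inner_gradient_left, real_inner_self_eq_norm_sq]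
  have hnorm : ‖((T - u x) ^ 2)⁻¹ • gradient u x‖ ^ 2 = ‖gradient u x‖ ^ 2 / (T - u x) ^ 4 := by
    rw [norm_smul, mul_pow, Real.norm_eq_abs, sq_abs]
    field_simp
  have hinner : ⟪((T - u x) ^ 2)⁻¹ • gradient u x,
      (((T - u x) ^ 2)⁻¹ • H + ((2 / (T - u x) ^ 3) • fderiv ℝ u x).smulRight (gradient u x))
        (((T - u x) ^ 2)⁻¹ • gradient u x)⟫
      = ⟪gradient u x, H (gradient u x)⟫ / (T - u x) ^ 6
        + 2 * ‖gradient u x‖ ^ 4 / (T - u x) ^ 7 := by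
    simp only [add_apply, smul_apply, ContinuousLinearMap.smulRight_apply,
      map_smul, inner_add_right, real_inner_smul_left, real_inner_smul_right, smul_eq_mul, hL,
      real_inner_self_eq_norm_sq]
    field_simp
  simp only [hinner, hnorm, smul_apply, smul_eq_mul, hL]
  ring

end Bending

/-- bending the smooth arrival time to infinity gives a supersolution
(key computation of Lemma 3.3, Euclidean-ambient case). The supersolution inequality
`div(Dv/√(ε²+|Dv|²)) + 1/√(ε²+|Dv|²) ≤ σ v` is written as `Qop ε σ 1 v x ≤ 0`. -/
theorem bending_supersolution (C₀ : ℝ) (hC₀ : 1 ≤ C₀) :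
    ∃ T : ℝ, 0 < T ∧
      ∀ (n : ℕ) (U : Set (EuclideanSpace ℝ (Fin n))) (u₀ : EuclideanSpace ℝ (Fin n) → ℝ)
        (ε σ : ℝ), IsOpen U → ContDiffOn ℝ 2 u₀ U →
        (∀ x ∈ U, C₀⁻¹ ≤ ‖gradient u₀ x‖) → (∀ x ∈ U, ‖gradient u₀ x‖ ≤ C₀) →
        (∀ x ∈ U, ‖fderiv ℝ (gradient u₀) x‖ ≤ C₀) →
        (∀ x ∈ U, vdiv (fun y => ‖gradient u₀ y‖⁻¹ • gradient u₀ y) x + ‖gradient u₀ x‖⁻¹ = 0) →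
        0 < ε → ε ≤ 1 → 0 < σ →
        ∀ x ∈ U ∩ {y | 0 ≤ u₀ y ∧ u₀ y < T},
          Qop ε σ 1 (fun y => (T - u₀ y)⁻¹ - T⁻¹) x ≤ 0 := by
  have hC₀pos : 0 < C₀ := one_pos.trans_le hC₀
  set T := (2 * C₀)⁻¹
  refine ⟨T, by positivity, ?_⟩
  intro n U u₀ ε σ hU hu₀ hlow _ hhess hflow hε hε1 hσ x ⟨hxU, hx0, hxT⟩
  have hdiff : ∀ᶠ y in 𝓝 x, DifferentiableAt ℝ u₀ y := by
    filter_upwards [hU.mem_nhds hxU] with y hy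
    exact (hu₀.contDiffAt (hU.mem_nhds hy)).differentiableAt two_ne_zero
  have hH := (hu₀.contDiffAt (hU.mem_nhds hxU)).differentiableAt_gradient.hasFDerivAt
  have hgrad : gradient u₀ x ≠ 0 :=
    norm_pos_iff.mp ((inv_pos.mpr hC₀pos).trans_le (hlow x hxU))
  have hq : ⟪gradient u₀ x, fderiv ℝ (gradient u₀) x (gradient u₀ x)⟫ ≤ C₀ * ‖gradient u₀ x‖ ^ 2 :=
    (real_inner_apply_self_le _ _).trans (by gcongr; exact hhess x hxU)
  have hτ : 0 < T - u₀ x := sub_pos.mpr hxT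
  have hv : 0 ≤ σ * ((T - u₀ x)⁻¹ - T⁻¹) :=
    mul_nonneg hσ.le (sub_nonneg.mpr (inv_anti₀ hτ (by linarith)))
  rw [Qop_bend_eq hε.ne' hdiff hH hxT, vdiv_gradient_eq_of_levelSetFlow hH hgrad (hflow x hxU)]
  linarith [bending_expr_nonpos hC₀ hτ (by linarith) (hlow x hxU) hq (pow_le_one₀ hε.le hε1)]
end

section
/- Algebraic core of the improved Kato inequality (Proposition 4.3): for every n ≥ 1 there exists a constant c < 1, depending only on n, such that for every n×n real symmetric matrix A and every unit vector X ∈ ℝⁿ, |(X⊗A)^{sym} − ((X⊗A)^{sym})^{tr}| ≤ c |A|. -/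
open scoped BigOperators

/-- A 3-tensor on ℝⁿ. -/
abbrev Tensor3 (n : ℕ) := Fin n → Fin n → Fin n → ℝ

/-- Inner product of 3-tensors: `⟨T,S⟩ = Σ_{i,j,k} T_{ijk} S_{ijk}`. -/
def tInner {n : ℕ} (T S : Tensor3 n) : ℝ := ∑ i, ∑ j, ∑ k, T i j k * S i j k

/-- Norm of a 3-tensor. -/
noncomputable def tNorm {n : ℕ} (T : Tensor3 n) : ℝ := Real.sqrt (tInner T T)

/-- A 3-tensor is totally symmetric if it is invariant under all permutations of indices. -/
def TotSym {n : ℕ} (T : Tensor3 n) : Prop :=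
  ∀ i j k, T i j k = T j i k ∧ T i j k = T i k j

/-- A 3-tensor is totally traceless if all three contractions vanish. -/
def TotTraceless {n : ℕ} (T : Tensor3 n) : Prop :=
  ∀ k, (∑ p, T p p k = 0) ∧ (∑ p, T p k p = 0) ∧ (∑ p, T k p p = 0)

/-- The trace vector `t_k = Σ_p T_{ppk}` of a 3-tensor. -/
def traceVec {n : ℕ} (T : Tensor3 n) (k : Fin n) : ℝ := ∑ p, T p p k

/-- The trace part `T^tr_{ijk} = (1/(n+2))(t_i δ_{jk} + t_j δ_{ik} + t_k δ_{ij})`. -/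
noncomputable def tracePart {n : ℕ} (T : Tensor3 n) : Tensor3 n := fun i j k =>
  (1 / ((n : ℝ) + 2)) * (traceVec T i * (if j = k then 1 else 0)
    + traceVec T j * (if i = k then 1 else 0)
    + traceVec T k * (if i = j then 1 else 0))

/-- The symmetrization `(X⊗A)^{sym}_{ijk} = (1/3)(X_i A_{jk} + X_j A_{ik} + X_k A_{ij})`. -/
noncomputable def symXA {n : ℕ} (X : Fin n → ℝ) (A : Matrix (Fin n) (Fin n) ℝ) : Tensor3 n := fun i j k =>
  (1 / 3) * (X i * A j k + X j * A i k + X k * A i j)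

/-!
Put `T = (X⊗A)^{sym}` with trace vector `t`, `v = AX`, `q = X·AX`, `s = tr A`. For totally
symmetric `T`, `⟨T, T^tr⟩ = |T^tr|² = 3|t|²/(n+2)`, so `|T⁰|² = |T|² - 3|t|²/(n+2)`; a direct
computation gives `|T|² = (|A|² + 2|v|²)/3` and `9|t|² = 4|v|² + 4sq + s²`. Besides `q² ≤ |v|²`,
the constraint that keeps `|T⁰|` away from `|A|` is Cauchy–Schwarz for the trace of the
compression `B = (1 - XXᵀ) A (1 - XXᵀ)`: `(s - q)² = (tr B)² ≤ n|B|² = n(|A|² - 2|v|² + q²)`.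
Together these force `|T⁰|² ≤ (n+1)/(n+2) |A|²`.
-/

open Finset Matrix

section Matrices

variable {ι : Type*} [Fintype ι]

theorem Matrix.IsSymm.vecMul_eq_mulVec {A : Matrix ι ι ℝ} (hA : A.IsSymm) (x : ι → ℝ) :
    x ᵥ* A = A *ᵥ x := by
  rw [← mulVec_transpose, hA.eq]

theorem sq_dotProduct_le (x y : ι → ℝ) : (x ⬝ᵥ y) ^ 2 ≤ (x ⬝ᵥ x) * (y ⬝ᵥ y) := by
  simpa only [dotProduct, sq] using sum_mul_sq_le_sq_mul_sq univ x y

theorem sq_trace_le_card_mul_sum_sq (B : Matrix ι ι ℝ) :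
    B.trace ^ 2 ≤ Fintype.card ι * ∑ i, ∑ j, B i j ^ 2 := calc
  B.trace ^ 2 ≤ Fintype.card ι * ∑ i, B i i ^ 2 := sq_sum_le_card_mul_sum_sq
  _ ≤ Fintype.card ι * ∑ i, ∑ j, B i j ^ 2 := by
    gcongr with i
    exact single_le_sum (f := fun j => B i j ^ 2) (fun _ _ => sq_nonneg _) (mem_univ i)

theorem sum_sq_eq_trace_mul_self {B : Matrix ι ι ℝ} (hB : B.IsSymm) :
    ∑ i, ∑ j, B i j ^ 2 = (B * B).trace := by
  simp only [trace, Matrix.diag, mul_apply, sq]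
  exact sum_congr rfl fun i _ => sum_congr rfl fun j _ => by rw [hB.apply i j]

theorem trace_mul_vecMulVec_eq_zero {B : Matrix ι ι ℝ} (hB : B.IsSymm) {x : ι → ℝ}
    (hBx : B *ᵥ x = 0) (y : ι → ℝ) :
    (B * vecMulVec x y).trace = 0 ∧ (B * vecMulVec y x).trace = 0 := by
  rw [mul_vecMulVec, trace_mul_comm, vecMulVec_mul, hB.vecMul_eq_mulVec, hBx]
  simp

variable {A : Matrix ι ι ℝ} {X : ι → ℝ}

/-- `(1 - XXᵀ) A (1 - XXᵀ)` for a unit vector `X`, written out. -/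
def compressPerp (X : ι → ℝ) (A : Matrix ι ι ℝ) : Matrix ι ι ℝ :=
  A - vecMulVec X (A *ᵥ X) - vecMulVec (A *ᵥ X) X + (X ⬝ᵥ A *ᵥ X) • vecMulVec X X

theorem compressPerp_mulVec_self (hX : X ⬝ᵥ X = 1) : compressPerp X A *ᵥ X = 0 := by
  simp only [compressPerp, add_mulVec, sub_mulVec, smul_mulVec, vecMulVec_mulVec, hX]
  simp [dotProduct_comm X]

theorem isSymm_compressPerp (hA : A.IsSymm) : (compressPerp X A).IsSymm := by
  simp only [IsSymm, compressPerp, transpose_add, transpose_sub, transpose_smul,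
    transpose_vecMulVec, hA.eq]
  abel

theorem trace_compressPerp (hX : X ⬝ᵥ X = 1) :
    (compressPerp X A).trace = A.trace - X ⬝ᵥ A *ᵥ X := by
  simp only [compressPerp, trace_add, trace_sub, trace_smul, trace_vecMulVec, hX,
    dotProduct_comm (A *ᵥ X) X]
  simp

theorem sum_sq_compressPerp (hA : A.IsSymm) (hX : X ⬝ᵥ X = 1) :
    ∑ i, ∑ j, compressPerp X A i j ^ 2
      = ∑ i, ∑ j, A i j ^ 2 - 2 * ((A *ᵥ X) ⬝ᵥ (A *ᵥ X)) + (X ⬝ᵥ A *ᵥ X) ^ 2 := by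
  have hB := isSymm_compressPerp (X := X) hA
  have hBv := trace_mul_vecMulVec_eq_zero hB (compressPerp_mulVec_self hX) (A *ᵥ X)
  have hBX := trace_mul_vecMulVec_eq_zero hB (compressPerp_mulVec_self hX) X
  have hBB : (compressPerp X A * compressPerp X A).trace = (A * compressPerp X A).trace := by
    nth_rw 2 [compressPerp]
    rw [Matrix.mul_add, Matrix.mul_sub, Matrix.mul_sub, Matrix.mul_smul, trace_add, trace_sub,
      trace_sub, trace_smul, hBv.1, hBv.2, hBX.1, trace_mul_comm]
    simp
  rw [sum_sq_eq_trace_mul_self hB, hBB, sum_sq_eq_trace_mul_self hA, compressPerp]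
  simp only [Matrix.mul_add, Matrix.mul_sub, Matrix.mul_smul, trace_add, trace_sub, trace_smul,
    mul_vecMulVec, trace_vecMulVec]
  rw [dotProduct_comm (A *ᵥ _), dotProduct_mulVec, hA.vecMul_eq_mulVec,
    dotProduct_comm (A *ᵥ X) X, smul_eq_mul]
  ring

theorem sq_trace_sub_le (hA : A.IsSymm) (hX : X ⬝ᵥ X = 1) :
    (A.trace - X ⬝ᵥ A *ᵥ X) ^ 2 ≤ Fintype.card ι
      * (∑ i, ∑ j, A i j ^ 2 - 2 * ((A *ᵥ X) ⬝ᵥ (A *ᵥ X)) + (X ⬝ᵥ A *ᵥ X) ^ 2) := by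
  simpa only [trace_compressPerp hX, sum_sq_compressPerp hA hX]
    using sq_trace_le_card_mul_sum_sq (compressPerp X A)

theorem sum_sq_sub_two_mul_add_sq_nonneg (hA : A.IsSymm) (hX : X ⬝ᵥ X = 1) :
    0 ≤ ∑ i, ∑ j, A i j ^ 2 - 2 * ((A *ᵥ X) ⬝ᵥ (A *ᵥ X)) + (X ⬝ᵥ A *ᵥ X) ^ 2 := by
  rw [← sum_sq_compressPerp hA hX]
  positivity

end Matrices

section Tensors

variable {n : ℕ}

theorem sum_rotate3 (F : Fin n → Fin n → Fin n → ℝ) :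
    ∑ i, ∑ j, ∑ k, F i j k = ∑ k, ∑ i, ∑ j, F i j k :=
  (sum_congr rfl fun _ _ => sum_comm).trans sum_comm

theorem tInner_sub_sub (T S : Tensor3 n) :
    tInner (T - S) (T - S) = tInner T T - 2 * tInner T S + tInner S S := by
  simp only [tInner, Pi.sub_apply, mul_sum, ← sum_sub_distrib, ← sum_add_distrib]
  exact sum_congr rfl fun _ _ => sum_congr rfl fun _ _ => sum_congr rfl fun _ _ => by ring

theorem TotSym.traceVec_eq_sum_mid {T : Tensor3 n} (hT : TotSym T) (k : Fin n) :
    ∑ p, T p k p = traceVec T k :=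
  sum_congr rfl fun p _ => (hT p p k).2.symm

theorem TotSym.traceVec_eq_sum_fst {T : Tensor3 n} (hT : TotSym T) (k : Fin n) :
    ∑ p, T k p p = traceVec T k :=
  (sum_congr rfl fun p _ => (hT k p p).1).trans (hT.traceVec_eq_sum_mid k)

theorem tInner_tracePart {S : Tensor3 n} (hS : TotSym S) (T : Tensor3 n) :
    tInner S (tracePart T) = 3 / (n + 2) * ∑ k, traceVec S k * traceVec T k := by
  have hS₃ : ∀ k, ∑ p, S p p k = traceVec S k := fun _ => rfl
  simp only [tInner, tracePart, mul_add, mul_left_comm (S _ _ _), ← mul_sum, sum_add_distrib,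
    mul_ite, mul_one, mul_zero, sum_ite_irrel, sum_const_zero, sum_ite_eq, mem_univ, if_true]
  rw [sum_comm (γ := Fin n) (f := fun i j => S i j i * traceVec T j),
    sum_comm (γ := Fin n) (f := fun i j => S i i j * traceVec T j)]
  simp only [← sum_mul, hS₃, hS.traceVec_eq_sum_mid, hS.traceVec_eq_sum_fst]
  ring

theorem totSym_tracePart (T : Tensor3 n) : TotSym (tracePart T) := by
  intro i j k
  constructor
  · simp only [tracePart, eq_comm (a := j) (b := i)]
    ring
  · simp only [tracePart, eq_comm (a := k) (b := j)]
    ring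

theorem traceVec_tracePart (T : Tensor3 n) : traceVec (tracePart T) = traceVec T := by
  funext k
  change ∑ p, tracePart T p p k = traceVec T k
  simp only [tracePart, if_true, mul_one, mul_ite, mul_zero, ← mul_sum, sum_add_distrib,
    sum_ite_eq', mem_univ, sum_const, card_univ, Fintype.card_fin, nsmul_eq_mul]
  field_simp
  ring

theorem tInner_sub_tracePart {T : Tensor3 n} (hT : TotSym T) :
    tInner (T - tracePart T) (T - tracePart T)
      = tInner T T - 3 / (n + 2) * ∑ k, traceVec T k ^ 2 := by
  rw [tInner_sub_sub, tInner_tracePart hT, tInner_tracePart (totSym_tracePart T),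
    traceVec_tracePart]
  simp only [sq]
  ring

theorem tInner_symXA {T : Tensor3 n} (hT : TotSym T) (X : Fin n → ℝ)
    (A : Matrix (Fin n) (Fin n) ℝ) :
    tInner T (symXA X A) = ∑ i, ∑ j, ∑ k, T i j k * (X i * A j k) := by
  set F := ∑ i, ∑ j, ∑ k, T i j k * (X i * A j k)
  have h₂ : ∑ i, ∑ j, ∑ k, T i j k * (X j * A i k) = F := by
    rw [sum_comm]
    exact sum_congr rfl fun i _ => sum_congr rfl fun j _ => sum_congr rfl fun k _ => by
      rw [(hT j i k).1]
  have h₃ : ∑ i, ∑ j, ∑ k, T i j k * (X k * A i j) = F := by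
    rw [sum_rotate3]
    exact sum_congr rfl fun i _ => sum_congr rfl fun j _ => sum_congr rfl fun k _ => by
      rw [(hT j k i).2, (hT j i k).1]
  calc tInner T (symXA X A)
      = (1 / 3) * (F + ∑ i, ∑ j, ∑ k, T i j k * (X j * A i k)
          + ∑ i, ∑ j, ∑ k, T i j k * (X k * A i j)) := by
        simp only [F, tInner, symXA, mul_sum, ← sum_add_distrib]
        exact sum_congr rfl fun _ _ => sum_congr rfl fun _ _ => sum_congr rfl fun _ _ => by ring
    _ = F := by rw [h₂, h₃]; ring

variable {A : Matrix (Fin n) (Fin n) ℝ} {X : Fin n → ℝ}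

theorem totSym_symXA (hA : A.IsSymm) (X : Fin n → ℝ) : TotSym (symXA X A) := by
  intro i j k
  simp only [symXA, hA.apply]
  constructor <;> ring

theorem traceVec_symXA (hA : A.IsSymm) (X : Fin n → ℝ) (k : Fin n) :
    traceVec (symXA X A) k = (2 * (A *ᵥ X) k + A.trace * X k) / 3 := by
  have hv : ∑ p, X p * A p k = (A *ᵥ X) k := congrFun (hA.vecMul_eq_mulVec X) k
  simp only [traceVec, symXA, mul_add, sum_add_distrib, ← mul_sum, hv, trace, Matrix.diag]
  ring

theorem tInner_symXA_self (hA : A.IsSymm) (hX : X ⬝ᵥ X = 1) :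
    tInner (symXA X A) (symXA X A)
      = (∑ i, ∑ j, A i j ^ 2 + 2 * ((A *ᵥ X) ⬝ᵥ (A *ᵥ X))) / 3 := by
  have hv : ∀ k, ∑ p, X p * A p k = (A *ᵥ X) k := fun k => congrFun (hA.vecMul_eq_mulVec X) k
  have h₁ : ∑ i, ∑ j, ∑ k, X i * A j k * (X i * A j k) = ∑ j, ∑ k, A j k ^ 2 := by
    have hX₂ : ∑ i, X i ^ 2 = 1 := by simpa only [dotProduct, sq] using hX
    simp only [← sq, mul_pow, ← mul_sum, ← sum_mul, hX₂, one_mul]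
  have h₂ : ∑ i, ∑ j, ∑ k, X j * A i k * (X i * A j k) = (A *ᵥ X) ⬝ᵥ (A *ᵥ X) := by
    rw [sum_rotate3]
    simp only [dotProduct, ← hv, sum_mul_sum]
    exact sum_congr rfl fun _ _ => sum_congr rfl fun _ _ => sum_congr rfl fun _ _ => by ring
  have h₃ : ∑ i, ∑ j, ∑ k, X k * A i j * (X i * A j k) = (A *ᵥ X) ⬝ᵥ (A *ᵥ X) := by
    rw [sum_comm]
    simp only [dotProduct, ← hv, sum_mul_sum]
    exact sum_congr rfl fun j _ => sum_congr rfl fun _ _ => sum_congr rfl fun k _ => by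
      rw [hA.apply j k]; ring
  rw [tInner_symXA (totSym_symXA hA X)]
  simp only [symXA, mul_assoc (1 / 3 : ℝ), ← mul_sum, add_mul, sum_add_distrib, h₁, h₂, h₃]
  ring

theorem sum_sq_traceVec_symXA (hA : A.IsSymm) (hX : X ⬝ᵥ X = 1) :
    ∑ k, traceVec (symXA X A) k ^ 2
      = (4 * ((A *ᵥ X) ⬝ᵥ (A *ᵥ X)) + 4 * A.trace * (X ⬝ᵥ A *ᵥ X) + A.trace ^ 2) / 9 := by
  rw [← mul_one (A.trace ^ 2), ← hX]
  simp only [traceVec_symXA hA, dotProduct, mul_sum, ← sum_add_distrib, sum_div]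
  exact sum_congr rfl fun _ _ => by ring

end Tensors

theorem kato_scalar_ineq {m N u q s : ℝ} (hm : 0 ≤ m) (hqu : q ^ 2 ≤ u)
    (hM : 0 ≤ N - 2 * u + q ^ 2) (hr : (s - q) ^ 2 ≤ m * (N - 2 * u + q ^ 2)) :
    (N + 2 * u) / 3 - 3 / (m + 2) * ((4 * u + 4 * s * q + s ^ 2) / 9)
      ≤ (m + 1) / (m + 2) * N := by
  rw [← sub_nonneg]
  have key : (m + 1) / (m + 2) * N
        - ((N + 2 * u) / 3 - 3 / (m + 2) * ((4 * u + 4 * s * q + s ^ 2) / 9))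
      = (6 * q ^ 2 + 6 * q * (s - q) + (s - q) ^ 2 + 2 * (m + 1) * (u - q ^ 2)
          + (2 * m + 1) * (N - 2 * u + q ^ 2)) / (3 * (m + 2)) := by
    field_simp
    ring
  rw [key]
  apply div_nonneg _ (by positivity)
  -- `6q² + 6q(s - q) + (s - q)² ≥ -(s - q)²/2 ≥ -m(N - 2u + q²)/2`
  nlinarith [sq_nonneg (q + (s - q) / 2), mul_nonneg hm hM, mul_nonneg hm (sub_nonneg.2 hqu)]

theorem tInner_symXA_sub_tracePart_le {n : ℕ} {A : Matrix (Fin n) (Fin n) ℝ} {X : Fin n → ℝ}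
    (hA : A.IsSymm) (hX : X ⬝ᵥ X = 1) :
    tInner (symXA X A - tracePart (symXA X A)) (symXA X A - tracePart (symXA X A))
      ≤ (n + 1) / (n + 2) * ∑ i, ∑ j, A i j ^ 2 := by
  rw [tInner_sub_tracePart (totSym_symXA hA X), tInner_symXA_self hA hX,
    sum_sq_traceVec_symXA hA hX]
  have hr := sq_trace_sub_le hA hX
  rw [Fintype.card_fin] at hr
  have hqu := sq_dotProduct_le X (A *ᵥ X)
  rw [hX, one_mul] at hqu
  exact kato_scalar_ineq n.cast_nonneg hqu (sum_sq_sub_two_mul_add_sq_nonneg hA hX) hr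

theorem improved_kato_algebraic_general (n : ℕ) :
    ∃ c : ℝ, c < 1 ∧
      ∀ (A : Matrix (Fin n) (Fin n) ℝ), A.IsSymm →
      ∀ (X : Fin n → ℝ), (∑ i, X i ^ 2 = 1) →
        tNorm (symXA X A - tracePart (symXA X A)) ≤
          c * Real.sqrt (∑ i, ∑ j, A i j ^ 2) := by
  refine ⟨√((n + 1) / (n + 2)), ?_, fun A hA X hX => ?_⟩
  · rw [Real.sqrt_lt' one_pos, one_pow, div_lt_one (by positivity)]
    linarith
  · have hX' : X ⬝ᵥ X = 1 := by simpa only [dotProduct, sq] using hX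
    rw [tNorm, ← Real.sqrt_mul (by positivity)]
    exact Real.sqrt_le_sqrt (tInner_symXA_sub_tracePart_le hA hX')

/-- algebraic core of the improved Kato inequality (Proposition 4.3):
there is a dimensional constant `c < 1` with
`|(X⊗A)^{sym} − ((X⊗A)^{sym})^{tr}| ≤ c |A|` for all symmetric `A` and unit `X`. -/
theorem improved_kato_algebraic (n : ℕ) (hn : 1 ≤ n) :
    ∃ c : ℝ, c < 1 ∧
      ∀ (A : Matrix (Fin n) (Fin n) ℝ), A.IsSymm →
      ∀ (X : Fin n → ℝ), (∑ i, X i ^ 2 = 1) →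
        tNorm (symXA X A - tracePart (symXA X A)) ≤
          c * Real.sqrt (∑ i, ∑ j, A i j ^ 2) :=
  improved_kato_algebraic_general n
end
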